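/- arXiv:2403.02190 — 5 statements merged into one kernel-verified Lean document; each statement's English description precedes it below -/
import Mathlib

section
/- Let q0, q1 : ℝ^n → ℝ be quadratic functions q_i(x) = xᵀ P_i x + 2 g_iᵀ x + s_i (with P_i symmetric, g_i ∈ ℝ^n, s_i ∈ ℝ for i = 0,1), and suppose there exists a point x̄ ∈ ℝ^n with q1(x̄) < 0. Then the following are equivalent: (i) for all x ∈ ℝ^n, q1(x) ≤ 0 implies q0(x) ≤ 0; (ii) there exists λ ≥ 0 such that the block matrix λ·[[P1, g1],[g1ᵀ, s1]] − [[P0, g0],[g0ᵀ, s0]] is positive semidefinite. -/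
/-!
Homogenizing `x ↦ (x, 1)` turns `q₀, q₁` into the quadratic forms `Q₀, Q₁` of the block matrices,
and (ii) says exactly `Q₀ ≤ λ Q₁`. Hypothesis (i) passes to every `(x, t)` with `t ≠ 0` by scaling,
and to `t = 0` by letting `(x, 0) ± δ (x̄, 1)` tend to `(x, 0)`.

For two real quadratic forms, Dines' theorem says that the joint range `{(Q₀ v, Q₁ v)}` is a convex
cone in the plane. If `Q₁ v ≤ 0 → Q₀ v ≤ 0`, this cone misses the open quadrant `{a > 0, b < 0}`;
a line separating the two has slope `λ ≥ 0`, and the Slater point keeps it from being vertical.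
-/

open Matrix Topology

theorem exists_pos_smul_eq_of_add_eq_smul {u u' m : ℝ × ℝ} {s : ℝ} (hm : m ≠ 0) (hs : 0 < s)
    (hsum : u + u' = s • m) (hu : m.2 * u.1 - m.1 * u.2 = 0) :
    ∃ c : ℝ, 0 < c ∧ (c • u = m ∨ c • u' = m) := by
  have hnorm : 0 < m.1 ^ 2 + m.2 ^ 2 := by
    have : m.1 ≠ 0 ∨ m.2 ≠ 0 := by contrapose! hm; exact Prod.ext hm.1 hm.2
    rcases this with h | h <;> positivity
  set κ := (u.1 * m.1 + u.2 * m.2) / (m.1 ^ 2 + m.2 ^ 2)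
  have hκ : u = κ • m := by
    ext <;> simp only [κ, Prod.smul_fst, Prod.smul_snd, smul_eq_mul] <;> field_simp
    · linear_combination m.2 * hu
    · linear_combination -m.1 * hu
  have hκ' : u' = (s - κ) • m := by
    rw [sub_smul, ← hsum, ← hκ, add_sub_cancel_left]
  rcases lt_or_ge 0 κ with hpos | hnpos
  · exact ⟨κ⁻¹, inv_pos.2 hpos, .inl (by rw [hκ, inv_smul_smul₀ hpos.ne'])⟩
  · have : 0 < s - κ := by linarith
    exact ⟨(s - κ)⁻¹, inv_pos.2 this, .inr (by rw [hκ', inv_smul_smul₀ this.ne'])⟩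

theorem ConvexCone.exists_forall_fst_le_mul_snd (K : ConvexCone ℝ (ℝ × ℝ)) (h0 : K.Pointed)
    (hK : ∀ p ∈ K, p.2 < 0 → p.1 ≤ 0) (hneg : ∃ p ∈ K, p.2 < 0) :
    ∃ lam : ℝ, 0 ≤ lam ∧ ∀ p ∈ K, p.1 ≤ lam * p.2 := by
  obtain ⟨f, u, hfC, hfK⟩ := geometric_hahn_banach_open ((convex_Ioi 0).prod (convex_Iio 0))
    (isOpen_Ioi.prod isOpen_Iio) K.convex
    (Set.disjoint_left.2 fun p hp hpK => (hK p hpK hp.2).not_gt hp.1)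
  have hu : u ≤ 0 := by simpa using hfK 0 h0
  have hfK' : ∀ p ∈ K, 0 ≤ f p := by
    intro p hp
    by_contra! hfp
    have := hfK _ (K.smul_mem (c := (1 - u) / -f p) (div_pos (by linarith) (by linarith)) hp)
    rw [map_smul, smul_eq_mul, div_mul_eq_mul_div, mul_div_assoc, div_neg, div_self hfp.ne,
      mul_neg, mul_one] at this
    linarith
  have hfC' : ∀ p ∈ Set.Ici (0 : ℝ) ×ˢ Set.Iic (0 : ℝ), f p ≤ 0 := by
    rw [← closure_Ioi, ← closure_Iio, ← closure_prod_eq]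
    exact closure_minimal (fun p hp => ((hfC p hp).trans_le hu).le)
      (isClosed_le f.continuous continuous_const)
  have hf : ∀ p : ℝ × ℝ, f p = p.1 * f (1, 0) + p.2 * f (0, 1) := by
    intro p
    conv_lhs => rw [show p = p.1 • ((1 : ℝ), (0 : ℝ)) + p.2 • ((0 : ℝ), (1 : ℝ)) by ext <;> simp]
    simp only [map_add, map_smul, smul_eq_mul]
  have ha : f (1, 0) ≤ 0 := hfC' _ (by simp)
  have hb : 0 ≤ f (0, 1) := by
    have := hfC' (0, -1) (by simp)
    rw [hf] at this
    linarith
  obtain ⟨q, hq, hq2⟩ := hneg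
  have ha' : f (1, 0) < 0 := by
    refine ha.lt_of_ne fun ha0 => ?_
    have h1 := hfC (1, -1) (by simp)
    have h2 := hfK' q hq
    rw [hf, ha0] at h1 h2
    nlinarith
  refine ⟨f (0, 1) / -f (1, 0), div_nonneg hb (neg_nonneg.2 ha), fun p hp => ?_⟩
  have := hfK' p hp
  rw [hf] at this
  rw [div_mul_eq_mul_div, le_div_iff₀ (neg_pos.2 ha')]
  linarith

namespace QuadraticMap

section CommRing

variable {R M N : Type*} [CommRing R] [AddCommGroup M] [Module R M] [AddCommGroup N] [Module R N]

theorem map_smul_add_smul (Q : QuadraticMap R M N) (a b : R) (v w : M) :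
    Q (a • v + b • w) = (a * a) • Q v + (b * b) • Q w + (a * b) • polar Q v w := by
  rw [QuadraticMap.map_add (⇑Q), QuadraticMap.map_smul, QuadraticMap.map_smul, polar_smul_left,
    polar_smul_right, smul_smul]

theorem map_smul_add_smul_add_map_smul_sub_smul (Q : QuadraticMap R M N) (a b : R) (v w : M) :
    Q (a • v + b • w) + Q (b • v - a • w) = (a * a + b * b) • (Q v + Q w) := by
  rw [sub_eq_add_neg, ← neg_smul, map_smul_add_smul, map_smul_add_smul]
  module

variable {N₁ N₂ : Type*} [AddCommGroup N₁] [Module R N₁] [AddCommGroup N₂] [Module R N₂]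

def pair (Q₁ : QuadraticMap R M N₁) (Q₂ : QuadraticMap R M N₂) : QuadraticMap R M (N₁ × N₂) :=
  (LinearMap.inl R N₁ N₂).compQuadraticMap Q₁ + (LinearMap.inr R N₁ N₂).compQuadraticMap Q₂

@[simp]
theorem pair_apply (Q₁ : QuadraticMap R M N₁) (Q₂ : QuadraticMap R M N₂) (v : M) :
    pair Q₁ Q₂ v = (Q₁ v, Q₂ v) := by
  simp [pair]

end CommRing

variable {V : Type*} [AddCommGroup V] [Module ℝ V]

theorem map_sqrt_smul {N : Type*} [AddCommGroup N] [Module ℝ N] (Q : QuadraticMap ℝ V N)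
    {c : ℝ} (hc : 0 ≤ c) (v : V) : Q (√c • v) = c • Q v := by
  rw [QuadraticMap.map_smul, Real.mul_self_sqrt hc]

theorem map_smul_nonpos_iff (Q : QuadraticForm ℝ V) {t : ℝ} (ht : t ≠ 0) (v : V) :
    Q (t • v) ≤ 0 ↔ Q v ≤ 0 := by
  rw [QuadraticMap.map_smul, smul_eq_mul, ← neg_nonneg, ← mul_neg, ← neg_nonneg (a := Q v)]
  exact mul_nonneg_iff_of_pos_left (mul_self_pos.2 ht)

theorem exists_map_smul_add_smul_eq_zero (Q : QuadraticForm ℝ V) {v w : V}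
    (h : Q v + Q w = 0) : ∃ a b : ℝ, 0 < a ^ 2 + b ^ 2 ∧ Q (a • v + b • w) = 0 := by
  rcases eq_or_ne (Q v) 0 with hv | hv
  · exact ⟨1, 0, by norm_num, by simpa using hv⟩
  have hdisc : 0 ≤ discrim (Q v) (polar Q v w) (Q w) := by
    rw [discrim, eq_neg_of_add_eq_zero_right h]
    nlinarith [sq_nonneg (polar Q v w), sq_nonneg (Q v)]
  obtain ⟨a, ha⟩ := exists_quadratic_eq_zero hv ⟨_, (Real.mul_self_sqrt hdisc).symm⟩
  refine ⟨a, 1, by positivity, ?_⟩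
  rw [map_smul_add_smul]
  simp only [smul_eq_mul]
  linear_combination ha

-- `Q (a • v + b • w) + Q (b • v - a • w) = (a² + b²) • m` with `m = Q v + Q w`; choosing `(a, b)`
-- so that the first summand lies on the line `ℝ m`, one of the two summands is a positive
-- multiple of `m`.
theorem exists_map_eq_map_add_map (Q : QuadraticMap ℝ V (ℝ × ℝ)) (v w : V) :
    ∃ z, Q z = Q v + Q w := by
  set m := Q v + Q w
  rcases eq_or_ne m 0 with hm | hm
  · exact ⟨0, by rw [map_zero, hm]⟩
  let ℓ : ℝ × ℝ →ₗ[ℝ] ℝ := m.2 • LinearMap.fst ℝ ℝ ℝ - m.1 • LinearMap.snd ℝ ℝ ℝ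
  have hℓ : ∀ p, ℓ p = m.2 * p.1 - m.1 * p.2 := fun p => rfl
  obtain ⟨a, b, hab, hzero⟩ := exists_map_smul_add_smul_eq_zero (ℓ.compQuadraticMap Q)
    (v := v) (w := w)
    (by simp only [LinearMap.compQuadraticMap_apply, hℓ, m, Prod.fst_add, Prod.snd_add]; ring)
  have hsum : Q (a • v + b • w) + Q (b • v - a • w) = (a ^ 2 + b ^ 2) • m := by
    rw [map_smul_add_smul_add_map_smul_sub_smul, pow_two, pow_two]
  obtain ⟨c, hc, h | h⟩ := exists_pos_smul_eq_of_add_eq_smul hm hab hsum (by rw [← hℓ]; exact hzero)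
  · exact ⟨√c • (a • v + b • w), by rw [map_sqrt_smul _ hc.le, h]⟩
  · exact ⟨√c • (b • v - a • w), by rw [map_sqrt_smul _ hc.le, h]⟩

def rangeConvexCone (Q : QuadraticMap ℝ V (ℝ × ℝ)) : ConvexCone ℝ (ℝ × ℝ) where
  carrier := Set.range Q
  smul_mem' := by
    rintro c hc _ ⟨v, rfl⟩
    exact ⟨√c • v, map_sqrt_smul Q hc.le v⟩
  add_mem' := by
    rintro _ ⟨v, rfl⟩ _ ⟨w, rfl⟩
    exact exists_map_eq_map_add_map Q v w

theorem exists_nonneg_le_mul_of_nonpos_imp_nonpos (Q₀ Q₁ : QuadraticForm ℝ V)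
    (hslater : ∃ v, Q₁ v < 0) (h : ∀ v, Q₁ v ≤ 0 → Q₀ v ≤ 0) :
    ∃ lam : ℝ, 0 ≤ lam ∧ ∀ v, Q₀ v ≤ lam * Q₁ v := by
  obtain ⟨v₀, hv₀⟩ := hslater
  obtain ⟨lam, hlam, hle⟩ := (rangeConvexCone (pair Q₀ Q₁)).exists_forall_fst_le_mul_snd
    ⟨0, map_zero _⟩ (by rintro _ ⟨v, rfl⟩ hv; simpa using h v (by simpa using hv.le))
    ⟨_, ⟨v₀, rfl⟩, by simpa using hv₀⟩
  exact ⟨lam, hlam, fun v => by simpa using hle _ ⟨v, rfl⟩⟩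

theorem nonpos_imp_nonpos_of_apply_ne_zero (Q₀ Q₁ : QuadraticForm ℝ V) (ℓ : V →ₗ[ℝ] ℝ) {w : V}
    (hw : Q₁ w < 0) (hℓw : ℓ w ≠ 0) (h : ∀ v, ℓ v ≠ 0 → Q₁ v ≤ 0 → Q₀ v ≤ 0) (v : V)
    (hv : Q₁ v ≤ 0) : Q₀ v ≤ 0 := by
  rcases ne_or_eq (ℓ v) 0 with hℓv | hℓv
  · exact h v hℓv hv
  -- moving from `v` towards `w` or `-w`, whichever keeps `Q₁` negative, leaves the kernel of `ℓ`
  obtain ⟨w', hw', hℓw', hpolar⟩ : ∃ w', Q₁ w' < 0 ∧ ℓ w' ≠ 0 ∧ polar Q₁ v w' ≤ 0 := by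
    rcases le_total (polar Q₁ v w) 0 with hp | hp
    · exact ⟨w, hw, hℓw, hp⟩
    · exact ⟨-w, by rwa [QuadraticMap.map_neg], by simpa using hℓw, by simpa [polar_neg_right]⟩
  have hexp (Q : QuadraticForm ℝ V) (δ : ℝ) :
      Q (v + δ • w') = Q v + δ * polar Q v w' + δ ^ 2 * Q w' := by
    simpa [pow_two, add_right_comm] using map_smul_add_smul Q 1 δ v w'
  have hray : ∀ δ : ℝ, 0 < δ → Q₀ v + δ * polar Q₀ v w' + δ ^ 2 * Q₀ w' ≤ 0 := by
    intro δ hδ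
    rw [← hexp]
    refine h _ (by simpa [hℓv] using ⟨hδ.ne', hℓw'⟩) ?_
    rw [hexp]
    nlinarith [sq_nonneg δ]
  have hcont : Continuous fun δ : ℝ => Q₀ v + δ * polar Q₀ v w' + δ ^ 2 * Q₀ w' := by fun_prop
  refine le_of_tendsto (x := 𝓝[>] 0) ?_ (eventually_nhdsWithin_of_forall hray)
  simpa using (hcont.tendsto 0).mono_left nhdsWithin_le_nhds

end QuadraticMap

namespace Matrix

variable {ι : Type*}

def homogenization (P : Matrix ι ι ℝ) (g : ι → ℝ) (s : ℝ) : Matrix (ι ⊕ Fin 1) (ι ⊕ Fin 1) ℝ :=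
  fromBlocks P (of fun i _ => g i) (of fun _ j => g j) (of fun _ _ => s)

theorem isSymm_homogenization {P : Matrix ι ι ℝ} (hP : P.IsSymm) (g : ι → ℝ) (s : ℝ) :
    (homogenization P g s).IsSymm :=
  isSymm_fromBlocks_iff.mpr ⟨hP, rfl, rfl, rfl⟩

theorem smul_sumElim_inv_smul (z : ι ⊕ Fin 1 → ℝ) (hz : z (.inr 0) ≠ 0) :
    z (.inr 0) • Sum.elim ((z (.inr 0))⁻¹ • (z ∘ Sum.inl)) 1 = z := by
  ext (i | j)
  · simp [hz]
  · simp [Fin.fin_one_eq_zero j]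

variable [Fintype ι] [DecidableEq ι]

theorem posSemidef_smul_sub_iff {A B : Matrix ι ι ℝ} (hA : A.IsSymm) (hB : B.IsSymm) (lam : ℝ) :
    (lam • A - B).PosSemidef ↔ ∀ z, B.toQuadraticForm' z ≤ lam * A.toQuadraticForm' z := by
  simp only [posSemidef_iff_dotProduct_mulVec, isHermitian_iff_isSymm, (hA.smul lam).sub hB,
    true_and, star_trivial, sub_mulVec, smul_mulVec, dotProduct_sub, dotProduct_smul, smul_eq_mul,
    sub_nonneg, toQuadraticForm', LinearMap.BilinMap.toQuadraticMap_apply, toLinearMap₂'_apply']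

theorem toQuadraticForm'_homogenization_sumElim (P : Matrix ι ι ℝ) (g : ι → ℝ) (s : ℝ)
    (x : ι → ℝ) :
    (homogenization P g s).toQuadraticForm' (Sum.elim x 1) = x ⬝ᵥ P *ᵥ x + 2 * (g ⬝ᵥ x) + s := by
  simp only [toQuadraticForm', LinearMap.BilinMap.toQuadraticMap_apply, toLinearMap₂'_apply',
    homogenization, fromBlocks_mulVec, Sum.elim_comp_inl, Sum.elim_comp_inr,
    sumElim_dotProduct_sumElim, dotProduct_add]
  simp [mulVec, dotProduct, mul_comm (x _)]
  ring

theorem toQuadraticForm'_homogenization_nonpos_imp {P₀ P₁ : Matrix ι ι ℝ} {g₀ g₁ : ι → ℝ}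
    {s₀ s₁ : ℝ}
    (h : ∀ x, x ⬝ᵥ P₁ *ᵥ x + 2 * (g₁ ⬝ᵥ x) + s₁ ≤ 0 → x ⬝ᵥ P₀ *ᵥ x + 2 * (g₀ ⬝ᵥ x) + s₀ ≤ 0)
    (z : ι ⊕ Fin 1 → ℝ) (hz : z (.inr 0) ≠ 0) :
    (homogenization P₁ g₁ s₁).toQuadraticForm' z ≤ 0 →
      (homogenization P₀ g₀ s₀).toQuadraticForm' z ≤ 0 := by
  rw [← smul_sumElim_inv_smul z hz, QuadraticMap.map_smul_nonpos_iff _ hz,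
    QuadraticMap.map_smul_nonpos_iff _ hz, toQuadraticForm'_homogenization_sumElim,
    toQuadraticForm'_homogenization_sumElim]
  exact h _

end Matrix

/-- **S-procedure** (lossless case, single quadratic constraint with a Slater point):
for quadratic functions `q i (x) = xᵀ Pᵢ x + 2 gᵢᵀ x + sᵢ` with a point where `q1` is
negative, `q1 x ≤ 0 → q0 x ≤ 0` holds for all `x` iff there is `λ ≥ 0` such that
`λ·[[P1,g1],[g1ᵀ,s1]] − [[P0,g0],[g0ᵀ,s0]] ⪰ 0`. -/
theorem s_procedure {n : ℕ}
    (P0 P1 : Matrix (Fin n) (Fin n) ℝ) (g0 g1 : Fin n → ℝ) (s0 s1 : ℝ)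
    (hP0 : P0.IsSymm) (hP1 : P1.IsSymm)
    (q0 q1 : (Fin n → ℝ) → ℝ)
    (hq0 : ∀ x, q0 x = x ⬝ᵥ P0.mulVec x + 2 * (g0 ⬝ᵥ x) + s0)
    (hq1 : ∀ x, q1 x = x ⬝ᵥ P1.mulVec x + 2 * (g1 ⬝ᵥ x) + s1)
    (hslater : ∃ xb : Fin n → ℝ, q1 xb < 0) :
    (∀ x, q1 x ≤ 0 → q0 x ≤ 0) ↔
      ∃ lam : ℝ, 0 ≤ lam ∧
        (lam • fromBlocks P1 (Matrix.of fun i (_ : Fin 1) => g1 i)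
            (Matrix.of fun (_ : Fin 1) j => g1 j) (Matrix.of fun (_ : Fin 1) (_ : Fin 1) => s1)
          - fromBlocks P0 (Matrix.of fun i (_ : Fin 1) => g0 i)
            (Matrix.of fun (_ : Fin 1) j => g0 j)
            (Matrix.of fun (_ : Fin 1) (_ : Fin 1) => s0)).PosSemidef := by
  change _ ↔ ∃ lam : ℝ, 0 ≤ lam ∧
    (lam • homogenization P1 g1 s1 - homogenization P0 g0 s0).PosSemidef
  simp_rw [posSemidef_smul_sub_iff (isSymm_homogenization hP1 g1 s1)
    (isSymm_homogenization hP0 g0 s0)]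
  have hQ0 x : (homogenization P0 g0 s0).toQuadraticForm' (Sum.elim x 1) = q0 x := by
    rw [toQuadraticForm'_homogenization_sumElim, hq0]
  have hQ1 x : (homogenization P1 g1 s1).toQuadraticForm' (Sum.elim x 1) = q1 x := by
    rw [toQuadraticForm'_homogenization_sumElim, hq1]
  obtain ⟨xb, hxb⟩ := hslater
  constructor
  · intro h
    have hxb' : (homogenization P1 g1 s1).toQuadraticForm' (Sum.elim xb 1) < 0 := by rwa [hQ1]
    refine QuadraticMap.exists_nonneg_le_mul_of_nonpos_imp_nonpos _ _ ⟨_, hxb'⟩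
      (QuadraticMap.nonpos_imp_nonpos_of_apply_ne_zero _ _ (LinearMap.proj (Sum.inr 0 : Fin n ⊕ Fin 1))
        hxb' (by simp) fun z => toQuadraticForm'_homogenization_nonpos_imp (fun x => ?_) z)
    rw [← hq0, ← hq1]
    exact h x
  · rintro ⟨lam, hlam, hle⟩ x hx
    have := hle (Sum.elim x 1)
    rw [hQ0, hQ1] at this
    nlinarith
end

section
/- Let f : ℝ^n × ℝ^m × ℝ^d → ℝ^n and let f̃(x,u,w) = A x + B u + E w + g be an affine map (A ∈ ℝ^{n×n}, B ∈ ℝ^{n×m}, E ∈ ℝ^{n×d}, g ∈ ℝ^n). Fix a linearization point p̄ = (x̄, ū, w̄) and a componentwise nonnegative vector L ∈ ℝ^n such that for every (x,u,w) and every component i, |f_i(x,u,w) − f̃_i(x,u,w)| ≤ (1/2) L_i (‖x − x̄‖² + ‖u − ū‖² + ‖w − w̄‖²). Let κ : ℝ^n → ℝ^m, let ξ, ξ₊ ⊆ ℝ^n, let W ⊆ ℝ^d, and let δX, δU, δW ≥ 0 satisfy: ξ ⊆ closedBall(x̄, √δX), κ(ξ) ⊆ closedBall(ū, √δU), and ‖w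 − w̄‖² ≤ δW for all w ∈ W. Set r² = δX + δU + δW. If for all x ∈ ξ and all w ∈ W one has {f̃(x, κ(x), w)} ⊕ H(0, (1/2)L r²) ⊆ ξ₊, then for all x ∈ ξ and all w ∈ W, f(x, κ(x), w) ∈ ξ₊. -/
open Matrix Set
open scoped Pointwise

noncomputable section

def eunorm {k : ℕ} (v : Fin k → ℝ) : ℝ := Real.sqrt (∑ i, v i ^ 2)

def Hrect {k : ℕ} (c h : Fin k → ℝ) : Set (Fin k → ℝ) := {x | ∀ i, |x i - c i| ≤ h i}

/-! On `ξ × W` the squared distances to the linearization point add up to at most `r²`, so the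
true successor `f x (κ x) w` differs from the linearized one componentwise by at most
`(1/2) L_i r²`, i.e. it lies in the hyperrectangle `H(f̃(x, κ x, w), (1/2) L r²)`, which is
`{f̃(x, κ x, w)} ⊕ H(0, (1/2) L r²) ⊆ ξ₊`. -/

lemma eunorm_nonneg {k : ℕ} (v : Fin k → ℝ) : 0 ≤ eunorm v := Real.sqrt_nonneg _

lemma eunorm_sq_le_of_le_sqrt {k : ℕ} {v : Fin k → ℝ} {δ : ℝ} (hδ : 0 ≤ δ)
    (h : eunorm v ≤ Real.sqrt δ) : eunorm v ^ 2 ≤ δ :=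
  (Real.le_sqrt (eunorm_nonneg v) hδ).mp h

lemma singleton_add_Hrect_zero {k : ℕ} (c h : Fin k → ℝ) : {c} + Hrect 0 h = Hrect c h := by
  ext y
  simp only [singleton_add, image_add_left, mem_preimage, Hrect, mem_ofPred_eq, Pi.zero_apply,
    sub_zero, neg_add_eq_sub, Pi.sub_apply]

theorem conservatism_lemma_general {n m d : ℕ}
    (f : (Fin n → ℝ) → (Fin m → ℝ) → (Fin d → ℝ) → (Fin n → ℝ))
    (A : Matrix (Fin n) (Fin n) ℝ) (B : Matrix (Fin n) (Fin m) ℝ)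
    (E : Matrix (Fin n) (Fin d) ℝ) (g : Fin n → ℝ)
    (xbar : Fin n → ℝ) (ubar : Fin m → ℝ) (wbar : Fin d → ℝ)
    (Lv : Fin n → ℝ) (hLv : ∀ i, 0 ≤ Lv i)
    (hlin : ∀ x u w, ∀ i,
      |f x u w i - (A.mulVec x + B.mulVec u + E.mulVec w + g) i| ≤
        (1 / 2) * Lv i *
          (eunorm (x - xbar) ^ 2 + eunorm (u - ubar) ^ 2 + eunorm (w - wbar) ^ 2))
    (κ : (Fin n → ℝ) → (Fin m → ℝ))
    (ξ ξp : Set (Fin n → ℝ)) (W : Set (Fin d → ℝ))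
    (δX δU δW : ℝ) (hδX : 0 ≤ δX) (hδU : 0 ≤ δU)
    (hξ : ∀ x ∈ ξ, eunorm (x - xbar) ≤ Real.sqrt δX)
    (hκ : ∀ x ∈ ξ, eunorm (κ x - ubar) ≤ Real.sqrt δU)
    (hW : ∀ w ∈ W, eunorm (w - wbar) ^ 2 ≤ δW)
    (htrans : ∀ x ∈ ξ, ∀ w ∈ W,
      {A.mulVec x + B.mulVec (κ x) + E.mulVec w + g} +
        Hrect 0 (fun i => (1 / 2) * Lv i * (δX + δU + δW)) ⊆ ξp) :
    ∀ x ∈ ξ, ∀ w ∈ W, f x (κ x) w ∈ ξp := by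
  intro x hx w hw
  have hr : eunorm (x - xbar) ^ 2 + eunorm (κ x - ubar) ^ 2 + eunorm (w - wbar) ^ 2 ≤
      δX + δU + δW := by
    gcongr
    · exact eunorm_sq_le_of_le_sqrt hδX (hξ x hx)
    · exact eunorm_sq_le_of_le_sqrt hδU (hκ x hx)
    · exact hW w hw
  apply htrans x hx w hw
  rw [singleton_add_Hrect_zero]
  intro i
  calc _ ≤ _ := hlin x (κ x) w i
    _ ≤ (1 / 2) * Lv i * (δX + δU + δW) :=
      mul_le_mul_of_nonneg_left hr (mul_nonneg one_half_pos.le (hLv i))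

/-- **Conservatism lemma (Lemma 1)**: if `ξ` lies in the ball of radius `√δX` around `x̄`,
`κ(ξ)` lies in the ball of radius `√δU` around `ū`, every `w ∈ W` satisfies
`‖w − w̄‖² ≤ δW`, and the linearized image shifted by the worst-case error
hyperrectangle `H(0, (1/2)L r²)` (with `r² = δX + δU + δW`) lies in `ξ₊`, then the
true dynamics map `ξ` into `ξ₊` for every disturbance in `W`. -/
theorem conservatism_lemma {n m d : ℕ}
    (f : (Fin n → ℝ) → (Fin m → ℝ) → (Fin d → ℝ) → (Fin n → ℝ))
    (A : Matrix (Fin n) (Fin n) ℝ) (B : Matrix (Fin n) (Fin m) ℝ)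
    (E : Matrix (Fin n) (Fin d) ℝ) (g : Fin n → ℝ)
    (xbar : Fin n → ℝ) (ubar : Fin m → ℝ) (wbar : Fin d → ℝ)
    (Lv : Fin n → ℝ) (hLv : ∀ i, 0 ≤ Lv i)
    (hlin : ∀ x u w, ∀ i,
      |f x u w i - (A.mulVec x + B.mulVec u + E.mulVec w + g) i| ≤
        (1 / 2) * Lv i *
          (eunorm (x - xbar) ^ 2 + eunorm (u - ubar) ^ 2 + eunorm (w - wbar) ^ 2))
    (κ : (Fin n → ℝ) → (Fin m → ℝ))
    (ξ ξp : Set (Fin n → ℝ)) (W : Set (Fin d → ℝ))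
    (δX δU δW : ℝ) (hδX : 0 ≤ δX) (hδU : 0 ≤ δU) (hδW : 0 ≤ δW)
    (hξ : ∀ x ∈ ξ, eunorm (x - xbar) ≤ Real.sqrt δX)
    (hκ : ∀ x ∈ ξ, eunorm (κ x - ubar) ≤ Real.sqrt δU)
    (hW : ∀ w ∈ W, eunorm (w - wbar) ^ 2 ≤ δW)
    (htrans : ∀ x ∈ ξ, ∀ w ∈ W,
      {A.mulVec x + B.mulVec (κ x) + E.mulVec w + g} +
        Hrect 0 (fun i => (1 / 2) * Lv i * (δX + δU + δW)) ⊆ ξp) :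
    ∀ x ∈ ξ, ∀ w ∈ W, f x (κ x) w ∈ ξp :=
  conservatism_lemma_general f A B E g xbar ubar wbar Lv hLv hlin κ ξ ξp W δX δU δW hδX hδU hξ hκ hW
    htrans
end
end

section
/- Let n ∈ ℕ, let L ∈ ℝ^{n×n} be symmetric positive definite, let c ∈ ℝ^n, and let δX ≥ 0. Then the ellipsoid E(c, L⁻²) is contained in the Euclidean closed ball of radius √δX centered at c if and only if the block matrix [[I_n, L],[L, δX·I_n]] is positive semidefinite. -/
open Matrix

noncomputable section

/-- Ellipsoid `E(c, P) = {x : (x−c)ᵀ P (x−c) ≤ 1}`. -/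
def Ellip {n : ℕ} (c : Fin n → ℝ) (P : Matrix (Fin n) (Fin n) ℝ) : Set (Fin n → ℝ) :=
  {x | (x - c) ⬝ᵥ P.mulVec (x - c) ≤ 1}

/-!
As `L` is symmetric and invertible, `E(c, L⁻²)` is the image `c + L B` of the Euclidean unit
ball `B`, so the inclusion says `‖L u‖² ≤ δX` on `B`, i.e. (by homogeneity) `δX • 1 - L² ⪰ 0`.
That matrix is the Schur complement of the identity block of `[[1, L], [L, δX • 1]]`.
-/

namespace Matrix

variable {m n : Type*} [Fintype m] [Fintype n]

theorem dotProduct_transpose_mul_mulVec (M : Matrix m n ℝ) (u : n → ℝ) :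
    u ⬝ᵥ (Mᵀ * M) *ᵥ u = M *ᵥ u ⬝ᵥ M *ᵥ u := by
  rw [← mulVec_mulVec, dotProduct_mulVec, vecMul_transpose]

theorem mulVec_dotProduct_mulVec_le_on_unit_ball_iff (M : Matrix m n ℝ) {δ : ℝ} (hδ : 0 ≤ δ) :
    (∀ u, u ⬝ᵥ u ≤ 1 → M *ᵥ u ⬝ᵥ M *ᵥ u ≤ δ) ↔ ∀ u, M *ᵥ u ⬝ᵥ M *ᵥ u ≤ δ * (u ⬝ᵥ u) := by
  refine ⟨fun h u => ?_, fun h u hu => (h u).trans (mul_le_of_le_one_right hδ hu)⟩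
  rcases (Fintype.sum_nonneg fun i => mul_self_nonneg (u i) : 0 ≤ u ⬝ᵥ u).eq_or_lt with hu | hu
  · simp [dotProduct_self_eq_zero.1 hu.symm]
  set t := √(u ⬝ᵥ u)
  have ht : 0 < t := Real.sqrt_pos.2 hu
  have htt : t * t = u ⬝ᵥ u := Real.mul_self_sqrt hu.le
  have hunit : t⁻¹ • u ⬝ᵥ t⁻¹ • u = 1 := by
    rw [smul_dotProduct, dotProduct_smul, smul_eq_mul, smul_eq_mul, ← htt]
    field_simp
  have hw := h (t⁻¹ • u) hunit.le
  rw [mulVec_smul, smul_dotProduct, dotProduct_smul, smul_eq_mul, smul_eq_mul,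
    inv_mul_le_iff₀ ht, inv_mul_le_iff₀ ht] at hw
  exact hw.trans_eq (by rw [← htt]; ring)

theorem posSemidef_smul_one_sub_transpose_mul_self_iff [DecidableEq n] (M : Matrix m n ℝ) (δ : ℝ) :
    (δ • 1 - Mᵀ * M).PosSemidef ↔ ∀ u, M *ᵥ u ⬝ᵥ M *ᵥ u ≤ δ * (u ⬝ᵥ u) := by
  have hHerm : (δ • 1 - Mᵀ * M).IsHermitian := by
    refine isHermitian_iff_isSymm.2 ((isSymm_one.smul δ).sub ?_)
    rw [IsSymm, transpose_mul, transpose_transpose]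
  simp only [posSemidef_iff_dotProduct_mulVec, hHerm, true_and, star_trivial, sub_mulVec,
    dotProduct_sub, smul_mulVec, one_mulVec, dotProduct_smul, smul_eq_mul,
    ← mulVec_mulVec, dotProduct_mulVec _ Mᵀ, vecMul_transpose, sub_nonneg]

end Matrix

theorem eunorm_le_sqrt_iff {k : ℕ} (v : Fin k → ℝ) {δ : ℝ} (hδ : 0 ≤ δ) :
    eunorm v ≤ √δ ↔ v ⬝ᵥ v ≤ δ := by
  simp only [eunorm, Real.sqrt_le_sqrt_iff hδ, dotProduct, sq]

theorem Ellip_inv_sq_eq_image {n : ℕ} (c : Fin n → ℝ) {L : Matrix (Fin n) (Fin n) ℝ}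
    (hL : L.IsSymm) (hdet : IsUnit L.det) :
    Ellip c (L ^ 2)⁻¹ = (fun u => c + L *ᵥ u) '' {u | u ⬝ᵥ u ≤ 1} := by
  have hinv : (L ^ 2)⁻¹ = (L⁻¹)ᵀ * L⁻¹ := by
    rw [transpose_nonsing_inv, hL.eq, sq, Matrix.mul_inv_rev]
  ext x
  simp only [Ellip, hinv, dotProduct_transpose_mul_mulVec, Set.mem_ofPred_eq, Set.mem_image]
  constructor
  · intro hx
    exact ⟨L⁻¹ *ᵥ (x - c), hx, by rw [mulVec_mulVec, mul_nonsing_inv _ hdet, one_mulVec,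
      add_sub_cancel]⟩
  · rintro ⟨u, hu, rfl⟩
    rwa [add_sub_cancel_left, mulVec_mulVec, nonsing_inv_mul _ hdet, one_mulVec]

/-- The ellipsoid `E(c, L⁻²)` is inside the Euclidean closed ball of radius `√δX`
centered at `c` iff `[[I, L],[L, δX·I]] ⪰ 0`. -/
theorem ellipsoid_in_ball_iff {n : ℕ}
    (L : Matrix (Fin n) (Fin n) ℝ) (hL : L.PosDef) (c : Fin n → ℝ)
    (δX : ℝ) (hδX : 0 ≤ δX) :
    Ellip c (L ^ 2)⁻¹ ⊆ {x | eunorm (x - c) ≤ Real.sqrt δX} ↔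
      (fromBlocks (1 : Matrix (Fin n) (Fin n) ℝ) L L (δX • (1 : Matrix (Fin n) (Fin n) ℝ))).PosSemidef := by
  have hsymm : L.IsSymm := isHermitian_iff_isSymm.1 hL.1
  rw [Ellip_inv_sq_eq_image c hsymm hL.det_pos.ne'.isUnit, Set.image_subset_iff]
  let _ : Invertible (1 : Matrix (Fin n) (Fin n) ℝ) := invertibleOne
  calc _ ↔ ∀ u, u ⬝ᵥ u ≤ 1 → L *ᵥ u ⬝ᵥ L *ᵥ u ≤ δX := by
        simp only [Set.subset_def, Set.mem_preimage, Set.mem_ofPred_eq, add_sub_cancel_left,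
          eunorm_le_sqrt_iff _ hδX]
    _ ↔ ∀ u, L *ᵥ u ⬝ᵥ L *ᵥ u ≤ δX * (u ⬝ᵥ u) :=
        L.mulVec_dotProduct_mulVec_le_on_unit_ball_iff hδX
    _ ↔ (δX • 1 - Lᴴ * 1⁻¹ * L).PosSemidef := by
        rw [inv_one, Matrix.mul_one, conjTranspose_eq_transpose_of_trivial,
          L.posSemidef_smul_one_sub_transpose_mul_self_iff]
    _ ↔ (fromBlocks 1 L Lᴴ (δX • 1)).PosSemidef := (PosDef.fromBlocks₁₁ L _ PosDef.one).symm
    _ ↔ _ := by rw [hL.1.eq]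
end
end

section
/- Let L ∈ ℝ^{n×n} be symmetric positive definite, c, c₊ ∈ ℝ^n, let P₊ ∈ ℝ^{n×n} be symmetric positive definite, let M ∈ ℝ^{n×n} and b ∈ ℝ^n. Then the affine map x ↦ M x + b maps the ellipsoid E(c, L⁻²) into the ellipsoid E(c₊, P₊) if and only if there exists β ≥ 0 such that the block matrix [[β·I_n, 0, (M L)ᵀ],[0, 1 − β, (M c + b − c₊)ᵀ],[M L, M c + b − c₊, P₊⁻¹]] is positive semidefinite. -/
open Matrix

noncomputable section

/-- A vector as a single-row matrix. -/
def rowV {m : ℕ} (v : Fin m → ℝ) : Matrix (Fin 1) (Fin m) ℝ := Matrix.of fun _ j => v j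

/-- A vector as a single-column matrix. -/
def colV {m : ℕ} (v : Fin m → ℝ) : Matrix (Fin m) (Fin 1) ℝ := Matrix.of fun i _ => v i

/-- A scalar as a 1×1 matrix. -/
def sc (a : ℝ) : Matrix (Fin 1) (Fin 1) ℝ := Matrix.of fun _ _ => a

/-- 3×3 block matrix. -/
def block3 {n1 n2 n3 : Type*}
    (A11 : Matrix n1 n1 ℝ) (A12 : Matrix n1 n2 ℝ) (A13 : Matrix n1 n3 ℝ)
    (A21 : Matrix n2 n1 ℝ) (A22 : Matrix n2 n2 ℝ) (A23 : Matrix n2 n3 ℝ)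
    (A31 : Matrix n3 n1 ℝ) (A32 : Matrix n3 n2 ℝ) (A33 : Matrix n3 n3 ℝ) :
    Matrix ((n1 ⊕ n2) ⊕ n3) ((n1 ⊕ n2) ⊕ n3) ℝ :=
  fromBlocks (fromBlocks A11 A12 A21 A22) (fromRows A13 A23) (fromCols A31 A32) A33

/-! Substituting `x = c + L u` turns the inclusion into `|u| ≤ 1 → q (M L u + d) ≤ 1`, where
`q w = wᵀ P₊ w` and `d = M c + b - c₊`. Homogenized in `(u, t)` this says that the quadratic form
`t² - |u|²` being nonnegative forces `t² - q (M L u + t d)` to be nonnegative, so by the S-lemma it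
is equivalent to `β (t² - |u|²) ≤ t² - q (M L u + t d)` for some `β ≥ 0`. The Schur complement of
the block `P₊⁻¹` identifies this with positive semidefiniteness of the block matrix. -/

theorem exists_pos_quadratic_root {a b c : ℝ} (ha : 0 < a) (hc : c < 0) :
    ∃ r, 0 < r ∧ a * r ^ 2 + b * r + c = 0 := by
  set s := √(b ^ 2 - 4 * a * c)
  have hs : s ^ 2 = b ^ 2 - 4 * a * c := Real.sq_sqrt (by nlinarith)
  have hbs : b < s := by nlinarith [Real.sqrt_nonneg (b ^ 2 - 4 * a * c)]
  set r := (-b + s) / (2 * a)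
  have hr : 2 * a * r = -b + s := mul_div_cancel₀ _ (by positivity)
  refine ⟨r, div_pos (by linarith) (by linarith), ?_⟩
  have : 4 * a * (a * r ^ 2 + b * r + c) = 0 := by
    linear_combination (2 * a * r + s + b) * hr + hs
  simpa [ha.ne'] using this

namespace QuadraticMap

variable {V : Type*} [AddCommGroup V] [Module ℝ V]

theorem map_smul_add (Q : QuadraticMap ℝ V ℝ) (r : ℝ) (x y : V) :
    Q (r • x + y) = r ^ 2 * Q x + r * polar Q x y + Q y := by
  have := polar_smul_left (Q := Q) r x y
  simp only [polar, QuadraticMap.map_smul, smul_eq_mul] at this ⊢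
  linear_combination this

/-- Along the line `r ↦ r • x + y`, `Q₂` vanishes at some `r < 0` and at some `r > 0`; there `Q₁`
is nonnegative, and the two inequalities combine to the claim. -/
theorem mul_le_mul_of_nonneg_imp_nonneg (Q₁ Q₂ : QuadraticMap ℝ V ℝ)
    (h : ∀ z, 0 ≤ Q₂ z → 0 ≤ Q₁ z) {x y : V} (hx : 0 < Q₂ x) (hy : Q₂ y < 0) :
    Q₁ x * Q₂ y ≤ Q₁ y * Q₂ x := by
  obtain ⟨r₂, hr₂, hroot₂⟩ := exists_pos_quadratic_root hx (b := polar Q₂ x y) hy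
  obtain ⟨r₁, hr₁, hroot₁⟩ := exists_pos_quadratic_root hx (b := -polar Q₂ x y) hy
  have key : ∀ r, Q₂ (r • x + y) = 0 →
      0 ≤ r * (Q₂ x * polar Q₁ x y - Q₁ x * polar Q₂ x y) + (Q₁ y * Q₂ x - Q₁ x * Q₂ y) := by
    intro r hr
    have h₀ := mul_nonneg hx.le (h _ hr.ge)
    rw [map_smul_add] at hr h₀
    linear_combination h₀ + Q₁ x * hr
  have k₁ := key (-r₁) (by rw [map_smul_add]; linear_combination hroot₁)
  have k₂ := key r₂ (by rw [map_smul_add]; linear_combination hroot₂)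
  nlinarith

/-- The S-lemma; `β` is the infimum of `Q₁ / Q₂` over `{z | 0 < Q₂ z}`. -/
theorem s_lemma (Q₁ Q₂ : QuadraticMap ℝ V ℝ) (h : ∀ z, 0 ≤ Q₂ z → 0 ≤ Q₁ z)
    {z₀ : V} (hz₀ : 0 < Q₂ z₀) : ∃ β : ℝ, 0 ≤ β ∧ ∀ z, β * Q₂ z ≤ Q₁ z := by
  set S := (fun z => Q₁ z / Q₂ z) '' {z | 0 < Q₂ z}
  have hS : S.Nonempty := ⟨_, z₀, hz₀, rfl⟩
  have hS₀ : ∀ s ∈ S, 0 ≤ s := by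
    rintro _ ⟨z, hz, rfl⟩
    exact div_nonneg (h z hz.le) hz.le
  refine ⟨sInf S, le_csInf hS hS₀, fun z => ?_⟩
  rcases lt_trichotomy (Q₂ z) 0 with hz | hz | hz
  · rw [← div_le_iff_of_neg hz]
    refine le_csInf hS ?_
    rintro _ ⟨x, hx, rfl⟩
    rw [div_le_iff_of_neg hz, div_mul_eq_mul_div, div_le_iff₀ hx]
    exact mul_le_mul_of_nonneg_imp_nonneg Q₁ Q₂ h hx hz
  · simpa [hz] using h z hz.ge
  · rw [← le_div_iff₀ hz]
    exact csInf_le ⟨0, hS₀⟩ ⟨z, hz, rfl⟩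

end QuadraticMap

section AffineQuadratic

variable {m n : Type*} [Fintype m] [Fintype n]

theorem Matrix.toQuadraticForm'_apply [DecidableEq m] (P : Matrix m m ℝ) (x : m → ℝ) :
    P.toQuadraticForm' x = x ⬝ᵥ P *ᵥ x := by
  simp [Matrix.toQuadraticForm', toLinearMap₂'_apply']

theorem quad_le_sq_of_forall_quad_le_one {A : Matrix m n ℝ} {P : Matrix m m ℝ} {d : m → ℝ}
    (h : ∀ u, u ⬝ᵥ u ≤ 1 → (A *ᵥ u + d) ⬝ᵥ P *ᵥ (A *ᵥ u + d) ≤ 1)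
    {u : n → ℝ} {t : ℝ} (hut : u ⬝ᵥ u ≤ t ^ 2) :
    (A *ᵥ u + t • d) ⬝ᵥ P *ᵥ (A *ᵥ u + t • d) ≤ t ^ 2 := by
  rcases eq_or_ne t 0 with rfl | ht
  · have hu : u = 0 := dotProduct_self_eq_zero.mp <|
      le_antisymm (by simpa using hut) (by simpa using dotProduct_star_self_nonneg u)
    simp [hu]
  · have hball : (t⁻¹ • u) ⬝ᵥ (t⁻¹ • u) ≤ 1 := by
      have : (t⁻¹ • u) ⬝ᵥ (t⁻¹ • u) = (u ⬝ᵥ u) / t ^ 2 := by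
        simp only [smul_dotProduct, dotProduct_smul, smul_eq_mul]
        field_simp
      rwa [this, div_le_one (by positivity)]
    set w := A *ᵥ (t⁻¹ • u) + d
    have hscale : A *ᵥ u + t • d = t • w := by
      rw [smul_add, mulVec_smul, smul_smul, mul_inv_cancel₀ ht, one_smul]
    rw [hscale, smul_dotProduct, mulVec_smul, dotProduct_smul, smul_eq_mul, smul_eq_mul,
      ← mul_assoc, ← sq]
    simpa only [mul_one] using mul_le_mul_of_nonneg_left (h _ hball) (sq_nonneg t)

theorem forall_quad_le_one_iff [DecidableEq m] [DecidableEq n]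
    (A : Matrix m n ℝ) (P : Matrix m m ℝ) (d : m → ℝ) :
    (∀ u, u ⬝ᵥ u ≤ 1 → (A *ᵥ u + d) ⬝ᵥ P *ᵥ (A *ᵥ u + d) ≤ 1) ↔
      ∃ β : ℝ, 0 ≤ β ∧ ∀ u t, (A *ᵥ u + t • d) ⬝ᵥ P *ᵥ (A *ᵥ u + t • d) ≤
        β * (u ⬝ᵥ u) + (1 - β) * t ^ 2 := by
  constructor
  · intro h
    let fst := LinearMap.fst ℝ (n → ℝ) ℝ
    let snd := LinearMap.snd ℝ (n → ℝ) ℝ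
    let Q₁ := QuadraticMap.sq.comp snd -
      P.toQuadraticForm'.comp (A.mulVecLin ∘ₗ fst + snd.smulRight d)
    let Q₂ := QuadraticMap.sq.comp snd - (1 : Matrix n n ℝ).toQuadraticForm'.comp fst
    have hQ₁ : ∀ z, Q₁ z = z.2 ^ 2 - (A *ᵥ z.1 + z.2 • d) ⬝ᵥ P *ᵥ (A *ᵥ z.1 + z.2 • d) := by
      intro z
      simp [Q₁, fst, snd, Matrix.toQuadraticForm'_apply, sq]
    have hQ₂ : ∀ z, Q₂ z = z.2 ^ 2 - z.1 ⬝ᵥ z.1 := by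
      intro z
      simp [Q₂, fst, snd, Matrix.toQuadraticForm'_apply, sq]
    obtain ⟨β, hβ, hle⟩ := QuadraticMap.s_lemma Q₁ Q₂ (z₀ := (0, 1))
      (fun z hz => by
        rw [hQ₂, sub_nonneg] at hz
        rw [hQ₁, sub_nonneg]
        exact quad_le_sq_of_forall_quad_le_one h hz)
      (by simp [hQ₂])
    refine ⟨β, hβ, fun u t => ?_⟩
    have := hle (u, t)
    rw [hQ₁, hQ₂] at this
    linarith
  · rintro ⟨β, hβ, hle⟩ u hu
    simpa using (hle u 1).trans (by nlinarith)

end AffineQuadratic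

theorem Matrix.dotProduct_inv_sq_mulVec {n : Type*} [Fintype n] [DecidableEq n]
    {L : Matrix n n ℝ} (hL : L.IsSymm) (v : n → ℝ) :
    v ⬝ᵥ (L ^ 2)⁻¹ *ᵥ v = (L⁻¹ *ᵥ v) ⬝ᵥ (L⁻¹ *ᵥ v) := by
  rw [sq, Matrix.mul_inv_rev, ← mulVec_mulVec, dotProduct_mulVec, ← mulVec_transpose,
    transpose_nonsing_inv, hL.eq]

theorem ellip_inv_sq_eq_image {n : ℕ} {L : Matrix (Fin n) (Fin n) ℝ} (hL : L.IsSymm)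
    (hdet : IsUnit L.det) (c : Fin n → ℝ) :
    Ellip c (L ^ 2)⁻¹ = (c + L *ᵥ ·) '' {u | u ⬝ᵥ u ≤ 1} := by
  ext x
  simp only [Ellip, Set.mem_ofPred_eq, Set.mem_image, dotProduct_inv_sq_mulVec hL]
  constructor
  · intro hx
    refine ⟨L⁻¹ *ᵥ (x - c), hx, ?_⟩
    rw [mulVec_mulVec, mul_nonsing_inv _ hdet, one_mulVec, add_sub_cancel]
  · rintro ⟨u, hu, rfl⟩
    rwa [add_sub_cancel_left, mulVec_mulVec, nonsing_inv_mul _ hdet, one_mulVec]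

theorem block3_eq_fromBlocks {n : ℕ} {k : Type*} (X : Matrix k k ℝ) (Y : Matrix (Fin 1) (Fin 1) ℝ)
    (A : Matrix (Fin n) k ℝ) (d : Fin n → ℝ) (Q : Matrix (Fin n) (Fin n) ℝ) :
    block3 X 0 Aᵀ 0 Y (rowV d) A (colV d) Q =
      fromBlocks (fromBlocks X 0 0 Y) (fromCols A (colV d))ᴴ (fromCols A (colV d)) Q := by
  rw [block3, conjTranspose_fromCols_eq_fromRows_conjTranspose,
    conjTranspose_eq_transpose_of_trivial]
  congr

theorem forall_sumElim_fin_one {k : Type*} {p : (k ⊕ Fin 1 → ℝ) → Prop} :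
    (∀ y, p y) ↔ ∀ u t, p (Sum.elim u fun _ => t) := by
  refine ⟨fun h u t => h _, fun h y => ?_⟩
  convert h (y ∘ Sum.inl) (y (Sum.inr 0))
  ext (i | i)
  · rfl
  · rw [Subsingleton.elim i 0]; rfl

section BlockEvaluation

variable {n : ℕ} {k : Type*} [Fintype k]

theorem fromCols_colV_mulVec_sumElim (A : Matrix (Fin n) k ℝ) (d : Fin n → ℝ) (u : k → ℝ)
    (t : ℝ) : fromCols A (colV d) *ᵥ (Sum.elim u fun _ => t) = A *ᵥ u + t • d := by
  rw [fromCols_mulVec_sumElim]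
  congr 1
  ext i
  simp [colV, mulVec, dotProduct, mul_comm]

theorem sumElim_dotProduct_fromBlocks_mulVec [DecidableEq k] (β a : ℝ) (u : k → ℝ) (t : ℝ) :
    (Sum.elim u fun _ => t) ⬝ᵥ fromBlocks (β • (1 : Matrix k k ℝ)) 0 0 (sc a) *ᵥ
      (Sum.elim u fun _ => t) = β * (u ⬝ᵥ u) + a * t ^ 2 := by
  simp only [fromBlocks_mulVec, Sum.elim_comp_inl, Sum.elim_comp_inr, zero_mulVec, add_zero,
    zero_add, smul_mulVec, one_mulVec, sumElim_dotProduct_sumElim, dotProduct_smul, smul_eq_mul]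
  simp [sc, mulVec, dotProduct, sq, mul_left_comm]

end BlockEvaluation

theorem Matrix.dotProduct_conjTranspose_mul_mul_mulVec {m n : Type*} [Fintype m] [Fintype n]
    (C : Matrix m n ℝ) (P : Matrix m m ℝ) (y : n → ℝ) :
    y ⬝ᵥ (Cᴴ * P * C) *ᵥ y = (C *ᵥ y) ⬝ᵥ P *ᵥ (C *ᵥ y) := by
  rw [← mulVec_mulVec, ← mulVec_mulVec, dotProduct_mulVec, conjTranspose_eq_transpose_of_trivial,
    vecMul_transpose]

theorem posSemidef_schurComplement_iff {n : ℕ} {k : Type*} [Fintype k] [DecidableEq k]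
    {P : Matrix (Fin n) (Fin n) ℝ} (hP : P.IsHermitian) (A : Matrix (Fin n) k ℝ)
    (d : Fin n → ℝ) (β : ℝ) :
    (fromBlocks (β • (1 : Matrix k k ℝ)) 0 0 (sc (1 - β)) -
        (fromCols A (colV d))ᴴ * P * fromCols A (colV d)).PosSemidef ↔
      ∀ u t, (A *ᵥ u + t • d) ⬝ᵥ P *ᵥ (A *ᵥ u + t • d) ≤ β * (u ⬝ᵥ u) + (1 - β) * t ^ 2 := by
  have hherm : (fromBlocks (β • (1 : Matrix k k ℝ)) 0 0 (sc (1 - β))).IsHermitian := by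
    rw [isHermitian_fromBlocks_iff]
    refine ⟨?_, ?_, ?_, ?_⟩ <;> ext <;> simp [sc, one_apply, eq_comm]
  rw [posSemidef_iff_dotProduct_mulVec, and_iff_right
    (hherm.sub (isHermitian_conjTranspose_mul_mul _ hP)), forall_sumElim_fin_one]
  refine forall₂_congr fun u t => ?_
  rw [star_trivial, sub_mulVec, dotProduct_sub, sub_nonneg,
    dotProduct_conjTranspose_mul_mul_mulVec, fromCols_colV_mulVec_sumElim,
    sumElim_dotProduct_fromBlocks_mulVec]

theorem block3_posSemidef_iff {n : ℕ} {k : Type*} [Fintype k] [DecidableEq k]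
    {P : Matrix (Fin n) (Fin n) ℝ} (hP : P.PosDef) (A : Matrix (Fin n) k ℝ) (d : Fin n → ℝ)
    (β : ℝ) :
    (block3 (β • (1 : Matrix k k ℝ)) 0 Aᵀ 0 (sc (1 - β)) (rowV d) A (colV d) P⁻¹).PosSemidef ↔
      ∀ u t, (A *ᵥ u + t • d) ⬝ᵥ P *ᵥ (A *ᵥ u + t • d) ≤ β * (u ⬝ᵥ u) + (1 - β) * t ^ 2 := by
  have hdet : IsUnit P.det := (isUnit_iff_isUnit_det P).mp hP.isUnit
  let : Invertible P⁻¹ := hP.inv.isUnit.invertible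
  have := PosDef.fromBlocks₂₂ (fromBlocks (β • (1 : Matrix k k ℝ)) 0 0 (sc (1 - β)))
    (fromCols A (colV d))ᴴ hP.inv
  rw [conjTranspose_conjTranspose, nonsing_inv_nonsing_inv P hdet] at this
  rw [block3_eq_fromBlocks, this, posSemidef_schurComplement_iff hP.1]

/-- The affine map `x ↦ M x + b` maps `E(c, L⁻²)` into `E(c₊, P₊)` iff there exists
`β ≥ 0` with `[[βI, 0, (ML)ᵀ],[0, 1 − β, (Mc + b − c₊)ᵀ],[ML, Mc + b − c₊, P₊⁻¹]] ⪰ 0`. -/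
theorem affine_ellipsoid_map_iff {n : ℕ}
    (L : Matrix (Fin n) (Fin n) ℝ) (hL : L.PosDef)
    (c cp : Fin n → ℝ) (Pp : Matrix (Fin n) (Fin n) ℝ) (hPp : Pp.PosDef)
    (M : Matrix (Fin n) (Fin n) ℝ) (b : Fin n → ℝ) :
    (∀ x ∈ Ellip c (L ^ 2)⁻¹, M.mulVec x + b ∈ Ellip cp Pp) ↔
      ∃ β : ℝ, 0 ≤ β ∧
        (block3 (β • (1 : Matrix (Fin n) (Fin n) ℝ)) 0 (M * L)ᵀ
                0 (sc (1 - β)) (rowV (M.mulVec c + b - cp))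
                (M * L) (colV (M.mulVec c + b - cp)) Pp⁻¹).PosSemidef := by
  have hshift : ∀ u, M *ᵥ (c + L *ᵥ u) + b - cp = (M * L) *ᵥ u + (M *ᵥ c + b - cp) := by
    intro u
    rw [mulVec_add, mulVec_mulVec]
    abel
  rw [ellip_inv_sq_eq_image (isHermitian_iff_isSymm.mp hL.1)
    ((isUnit_iff_isUnit_det L).mp hL.isUnit), Set.forall_mem_image]
  simp only [Ellip, Set.mem_ofPred_eq, hshift, forall_quad_le_one_iff, block3_posSemidef_iff hPp]
end
end

section
/- Let L ∈ ℝ^{n×n} be symmetric positive definite, let c ∈ ℝ^n, F ∈ ℝ^{m×n}, l ∈ ℝ^m, U_k ∈ ℝ^{p×m}, and define the affine controller κ(x) = K(x − c) + l with K = F L⁻¹. Then κ maps the ellipsoid E(c, L⁻²) into the set {u ∈ ℝ^m : ‖U_k u‖ ≤ 1} if and only if there exists τ ≥ 0 such that the block matrix [[τ·I_n, 0, Fᵀ U_kᵀ],[0, 1 − τ, lᵀ U_kᵀ],[U_k F, U_k l, I_p]] is positive semidefinite. -/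
/-!
With `x = L y + c`, the ellipsoid `E(c, L⁻²)` becomes the unit ball and `U κ(x) = A y + b` with
`A = U F`, `b = U l`; a Schur complement with respect to the identity block turns the matrix
inequality into `‖A y + t b‖² ≤ τ ‖y‖² + (1 - τ) t²` for all `y`, `t`. At `t = 1` this gives
`‖A y + b‖ ≤ 1` on the unit ball. Conversely (an instance of the S-lemma), let `y₀` maximise
`‖A y + b‖` on the unit ball. Either `A = 0` and `τ = 0` works, or `‖y₀‖ = 1` and the Lagrange
conditions hold at `y₀` with multiplier `μ = ⟪A y₀, A y₀ + b⟫`: `Aᵀ (A y₀ + b) = μ y₀`, because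
`y₀` also maximises the linear functional `⟪A ·, A y₀ + b⟫` on the ball, and `AᵀA ⪯ μ I`, by
comparing `y₀` with its reflections in hyperplanes. Writing
`A y + t b = A (y - t y₀) + t (A y₀ + b)` then gives the inequality with `τ = μ`.
-/

open Matrix

noncomputable section

open Metric Filter Topology InnerProductSpace RealInnerProductSpace

theorem nonpos_of_forall_ne_zero_le_sq_mul {a K : ℝ} (h : ∀ ε : ℝ, ε ≠ 0 → a ≤ ε ^ 2 * K) :
    a ≤ 0 := by
  have hlim : Tendsto (fun ε : ℝ => ε ^ 2 * K) (𝓝[≠] 0) (𝓝 0) := by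
    have : Continuous fun ε : ℝ => ε ^ 2 * K := by fun_prop
    simpa using (this.tendsto 0).mono_left nhdsWithin_le_nhds
  exact ge_of_tendsto hlim (eventually_nhdsWithin_of_forall h)

section SLemma

variable {E F : Type*} [NormedAddCommGroup E] [InnerProductSpace ℝ E]
  [NormedAddCommGroup F] [InnerProductSpace ℝ F]

theorem eq_mul_inner_of_isMaxOn_closedBall [CompleteSpace E] {ℓ : StrongDual ℝ E} {y₀ : E}
    (hy₀ : ‖y₀‖ = 1) (hmax : IsMaxOn ℓ (closedBall 0 1) y₀) (z : E) :
    ℓ z = ℓ y₀ * ⟪y₀, z⟫ := by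
  set v := (toDual ℝ E).symm ℓ
  have hv (x : E) : ℓ x = ⟪v, x⟫ := toDual_symm_apply.symm
  have hle : ‖v‖ ≤ ⟪v, y₀⟫ := by
    have hmem : ‖v‖⁻¹ • v ∈ closedBall (0 : E) 1 := by
      rw [mem_closedBall_zero_iff, norm_smul, norm_inv, norm_norm]
      exact inv_mul_le_one_of_le₀ le_rfl (norm_nonneg v)
    have := isMaxOn_iff.mp hmax _ hmem
    rwa [hv, hv, inner_smul_right, real_inner_self_eq_norm_sq, pow_two, ← mul_assoc,
      inv_mul_mul_self] at this
  have hvy : v = ‖v‖ • y₀ := by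
    have hge := real_inner_le_norm v y₀
    rw [hy₀, mul_one] at hge
    have := (inner_eq_norm_mul_iff_real (x := v) (y := y₀)).mp (by rw [hy₀, mul_one]; linarith)
    rwa [hy₀, one_smul] at this
  rw [hv, hv, hvy, inner_smul_left, inner_smul_left, real_inner_self_eq_norm_sq, hy₀]
  simp

variable (A : E →ₗ[ℝ] F) (b : F) {y₀ : E}

theorem sq_norm_map_sub_add_two_inner_nonpos
    (hmax : IsMaxOn (fun y => ‖A y + b‖) (closedBall 0 1) y₀) {y : E} (hy : ‖y‖ ≤ 1) :
    ‖A (y - y₀)‖ ^ 2 + 2 * ⟪A (y - y₀), A y₀ + b⟫ ≤ 0 := by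
  have h := pow_le_pow_left₀ (norm_nonneg _)
    (isMaxOn_iff.mp hmax y (mem_closedBall_zero_iff.mpr hy)) 2
  have hsplit : A y + b = A (y - y₀) + (A y₀ + b) := by rw [map_sub]; abel
  rw [hsplit, norm_add_sq_real] at h
  linarith

theorem eq_zero_of_isMaxOn_of_norm_lt_one
    (hmax : IsMaxOn (fun y => ‖A y + b‖) (closedBall 0 1) y₀) (hy₀ : ‖y₀‖ < 1) : A = 0 := by
  ext d
  set s := (1 - ‖y₀‖) / (‖d‖ + 1)
  have hs : 0 < s := div_pos (sub_pos.mpr hy₀) (by positivity)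
  have hsd : ‖s • d‖ ≤ 1 - ‖y₀‖ := by
    rw [norm_smul, Real.norm_of_nonneg hs.le, div_mul_eq_mul_div]
    exact div_le_of_le_mul₀ (by positivity) (sub_pos.mpr hy₀).le (by nlinarith [norm_nonneg d])
  have h_add := sq_norm_map_sub_add_two_inner_nonpos A b hmax (y := y₀ + s • d)
    ((norm_add_le _ _).trans (by linarith))
  have h_sub := sq_norm_map_sub_add_two_inner_nonpos A b hmax (y := y₀ - s • d)
    ((norm_sub_le _ _).trans (by linarith))
  rw [add_sub_cancel_left] at h_add
  rw [sub_sub_cancel_left, map_neg, norm_neg, inner_neg_left] at h_sub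
  have hsq : ‖A (s • d)‖ ^ 2 = 0 := le_antisymm (by linarith) (sq_nonneg _)
  have := norm_eq_zero.mp (pow_eq_zero_iff two_ne_zero |>.mp hsq)
  rwa [map_smul, smul_eq_zero, or_iff_right hs.ne'] at this

theorem inner_map_eq_of_isMaxOn [FiniteDimensional ℝ E]
    (hmax : IsMaxOn (fun y => ‖A y + b‖) (closedBall 0 1) y₀) (hy₀ : ‖y₀‖ = 1) (z : E) :
    ⟪A z, A y₀ + b⟫ = ⟪A y₀, A y₀ + b⟫ * ⟪y₀, z⟫ := by
  set ℓ : StrongDual ℝ E := LinearMap.toContinuousLinearMap ((innerₛₗ ℝ (A y₀ + b)).comp A)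
  have hℓ (x : E) : ℓ x = ⟪A x, A y₀ + b⟫ := real_inner_comm _ _
  have hmaxℓ : IsMaxOn ℓ (closedBall 0 1) y₀ := isMaxOn_iff.mpr fun y hy => by
    have := sq_norm_map_sub_add_two_inner_nonpos A b hmax (mem_closedBall_zero_iff.mp hy)
    rw [map_sub, inner_sub_left] at this
    rw [hℓ, hℓ]
    nlinarith [sq_nonneg ‖A (y - y₀)‖]
  simpa only [hℓ] using eq_mul_inner_of_isMaxOn_closedBall hy₀ hmaxℓ z

theorem sq_norm_map_le_of_inner_ne_zero [FiniteDimensional ℝ E]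
    (hmax : IsMaxOn (fun y => ‖A y + b‖) (closedBall 0 1) y₀) (hy₀ : ‖y₀‖ = 1) {d : E}
    (hd : ⟪y₀, d⟫ ≠ 0) : ‖A d‖ ^ 2 ≤ ⟪A y₀, A y₀ + b⟫ * ‖d‖ ^ 2 := by
  have hd0 : ‖d‖ ≠ 0 := fun h => hd (by rw [norm_eq_zero.mp h, inner_zero_right])
  set s := 2 * ⟪y₀, d⟫ / ‖d‖ ^ 2
  have hs : s ≠ 0 := div_ne_zero (mul_ne_zero two_ne_zero hd) (pow_ne_zero 2 hd0)
  have hsd : s * ‖d‖ ^ 2 = 2 * ⟪y₀, d⟫ := div_mul_cancel₀ _ (pow_ne_zero 2 hd0)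
  -- `y₀ - s • d` is the reflection of `y₀` in the hyperplane orthogonal to `d`
  have hrefl : ‖y₀ - s • d‖ ≤ 1 := by
    refine (sq_le_one_iff₀ (norm_nonneg _)).mp (le_of_eq ?_)
    rw [norm_sub_sq_real, hy₀, norm_smul, inner_smul_right, mul_pow, Real.norm_eq_abs, sq_abs]
    linear_combination s * hsd
  have h := sq_norm_map_sub_add_two_inner_nonpos A b hmax hrefl
  rw [sub_sub_cancel_left, map_neg, norm_neg, inner_neg_left, map_smul, norm_smul,
    real_inner_smul_left, inner_map_eq_of_isMaxOn A b hmax hy₀, mul_pow, Real.norm_eq_abs,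
    sq_abs] at h
  have hs2 : 0 < s ^ 2 := by positivity
  refine le_of_mul_le_mul_left ?_ hs2
  clear_value s
  linear_combination h - s * ⟪A y₀, A y₀ + b⟫ * hsd

theorem sq_norm_map_le_of_isMaxOn [FiniteDimensional ℝ E]
    (hmax : IsMaxOn (fun y => ‖A y + b‖) (closedBall 0 1) y₀) (hy₀ : ‖y₀‖ = 1) (d : E) :
    ‖A d‖ ^ 2 ≤ ⟪A y₀, A y₀ + b⟫ * ‖d‖ ^ 2 := by
  by_cases hd : ⟪y₀, d⟫ = 0
  swap
  · exact sq_norm_map_le_of_inner_ne_zero A b hmax hy₀ hd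
  -- average the bound at `d + ε • y₀` and `d - ε • y₀`, then let `ε → 0`
  suffices ‖A d‖ ^ 2 - ⟪A y₀, A y₀ + b⟫ * ‖d‖ ^ 2 ≤ 0 by linarith
  refine nonpos_of_forall_ne_zero_le_sq_mul (K := ⟪A y₀, A y₀ + b⟫ - ‖A y₀‖ ^ 2) fun ε hε => ?_
  have hdy : ⟪d, y₀⟫ = 0 := by rwa [real_inner_comm]
  have h_add := sq_norm_map_le_of_inner_ne_zero A b hmax hy₀ (d := d + ε • y₀)
    (by rwa [inner_add_right, hd, real_inner_smul_right, real_inner_self_eq_norm_sq, hy₀,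
      zero_add, one_pow, mul_one])
  have h_sub := sq_norm_map_le_of_inner_ne_zero A b hmax hy₀ (d := d - ε • y₀)
    (by rwa [inner_sub_right, hd, real_inner_smul_right, real_inner_self_eq_norm_sq, hy₀,
      zero_sub, one_pow, mul_one, neg_ne_zero])
  simp only [map_add, map_sub, map_smul, norm_add_sq_real, norm_sub_sq_real, norm_smul,
    real_inner_smul_right, hdy, hy₀, mul_pow, Real.norm_eq_abs, sq_abs] at h_add h_sub
  linarith

theorem sq_norm_map_add_smul_le_of_isMaxOn [FiniteDimensional ℝ E]
    (hmax : IsMaxOn (fun y => ‖A y + b‖) (closedBall 0 1) y₀) (hy₀ : ‖y₀‖ = 1)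
    (hw : ‖A y₀ + b‖ ≤ 1) (y : E) (t : ℝ) :
    ‖A y + t • b‖ ^ 2 ≤ ⟪A y₀, A y₀ + b⟫ * ‖y‖ ^ 2 + (1 - ⟪A y₀, A y₀ + b⟫) * t ^ 2 := by
  have hsplit : A y + t • b = A (y - t • y₀) + t • (A y₀ + b) := by
    rw [map_sub, map_smul, smul_add]; abel
  have hcurv := sq_norm_map_le_of_isMaxOn A b hmax hy₀ (y - t • y₀)
  have hgrad := inner_map_eq_of_isMaxOn A b hmax hy₀ (y - t • y₀)
  have hw2 : ‖A y₀ + b‖ ^ 2 ≤ 1 := (sq_le_one_iff₀ (norm_nonneg _)).mpr hw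
  rw [norm_sub_sq_real, norm_smul, real_inner_smul_right, hy₀, mul_pow, Real.norm_eq_abs,
    sq_abs, real_inner_comm y₀ y] at hcurv
  rw [inner_sub_right, real_inner_smul_right, real_inner_self_eq_norm_sq, hy₀] at hgrad
  rw [hsplit, norm_add_sq_real, norm_smul, real_inner_smul_right, hgrad, mul_pow,
    Real.norm_eq_abs, sq_abs]
  nlinarith [mul_le_mul_of_nonneg_left hw2 (sq_nonneg t)]

theorem exists_sq_norm_map_add_smul_le [FiniteDimensional ℝ E]
    (h : ∀ y : E, ‖y‖ ≤ 1 → ‖A y + b‖ ≤ 1) :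
    ∃ τ : ℝ, 0 ≤ τ ∧ ∀ (y : E) (t : ℝ), ‖A y + t • b‖ ^ 2 ≤ τ * ‖y‖ ^ 2 + (1 - τ) * t ^ 2 := by
  by_cases hA : A = 0
  · have hb : ‖b‖ ≤ 1 := by simpa using h 0 (by simp)
    refine ⟨0, le_rfl, fun y t => ?_⟩
    rw [hA, LinearMap.zero_apply, zero_add, norm_smul, mul_pow, Real.norm_eq_abs, sq_abs]
    nlinarith [(sq_le_one_iff₀ (norm_nonneg b)).mpr hb, sq_nonneg t]
  obtain ⟨y₀, hy₀, hmax⟩ := (isCompact_closedBall (0 : E) 1).exists_isMaxOn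
    (nonempty_closedBall.mpr zero_le_one)
    ((A.continuous_of_finiteDimensional.add continuous_const).norm.continuousOn)
  rw [mem_closedBall_zero_iff] at hy₀
  have hy₀1 : ‖y₀‖ = 1 :=
    hy₀.eq_of_not_lt fun hlt => hA (eq_zero_of_isMaxOn_of_norm_lt_one A b hmax hlt)
  refine ⟨⟪A y₀, A y₀ + b⟫, ?_,
    sq_norm_map_add_smul_le_of_isMaxOn A b hmax hy₀1 (h y₀ hy₀)⟩
  have := sq_norm_map_le_of_isMaxOn A b hmax hy₀1 y₀
  rw [hy₀1, one_pow, mul_one] at this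
  exact (sq_nonneg _).trans this

theorem forall_norm_map_add_le_one_iff [FiniteDimensional ℝ E] :
    (∀ y : E, ‖y‖ ≤ 1 → ‖A y + b‖ ≤ 1) ↔
      ∃ τ : ℝ, 0 ≤ τ ∧ ∀ (y : E) (t : ℝ), ‖A y + t • b‖ ^ 2 ≤ τ * ‖y‖ ^ 2 + (1 - τ) * t ^ 2 := by
  refine ⟨exists_sq_norm_map_add_smul_le A b, fun ⟨τ, hτ, hq⟩ y hy => ?_⟩
  have hy2 : ‖y‖ ^ 2 ≤ 1 := (sq_le_one_iff₀ (norm_nonneg _)).mpr hy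
  have := hq y 1
  rw [one_smul, one_pow, mul_one] at this
  exact (sq_le_one_iff₀ (norm_nonneg _)).mp (by nlinarith)

end SLemma

theorem dotProduct_self_eq_sq_norm_toLp {ι : Type*} [Fintype ι] (v : ι → ℝ) :
    v ⬝ᵥ v = ‖WithLp.toLp 2 v‖ ^ 2 := by
  rw [← real_inner_self_eq_norm_sq, EuclideanSpace.inner_toLp_toLp, star_trivial]

theorem forall_dotProduct_mulVec_add_le_one_iff {ι κ : Type*} [Fintype ι] [DecidableEq ι]
    [Fintype κ] (A : Matrix κ ι ℝ) (b : κ → ℝ) :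
    (∀ y : ι → ℝ, y ⬝ᵥ y ≤ 1 → (A *ᵥ y + b) ⬝ᵥ (A *ᵥ y + b) ≤ 1) ↔
      ∃ τ : ℝ, 0 ≤ τ ∧ ∀ (y : ι → ℝ) (t : ℝ),
        (A *ᵥ y + t • b) ⬝ᵥ (A *ᵥ y + t • b) ≤ τ * (y ⬝ᵥ y) + (1 - τ) * t ^ 2 := by
  have h := forall_norm_map_add_le_one_iff (toEuclideanLin A) (WithLp.toLp 2 b)
  simp only [(WithLp.toLp_surjective 2).forall] at h
  simp only [dotProduct_self_eq_sq_norm_toLp, sq_le_one_iff₀ (norm_nonneg _)]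
  exact h

section Block

variable {ι : Type*} [Fintype ι] [DecidableEq ι] {p : ℕ}

theorem dotProduct_fromBlocks_smul_one_sc_mulVec (τ : ℝ) (y : ι → ℝ) (s : Fin 1 → ℝ) :
    (y ⊕ᵥ s) ⬝ᵥ (fromBlocks (τ • (1 : Matrix ι ι ℝ)) 0 0 (sc (1 - τ)) *ᵥ (y ⊕ᵥ s)) =
      τ * (y ⬝ᵥ y) + (1 - τ) * s 0 ^ 2 := by
  rw [fromBlocks_mulVec, Sum.elim_comp_inl, Sum.elim_comp_inr, zero_mulVec, zero_mulVec,
    add_zero, zero_add, smul_mulVec, one_mulVec, sumElim_dotProduct_sumElim, dotProduct_smul,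
    smul_eq_mul]
  simp only [dotProduct, mulVec, sc, of_apply, Finset.univ_unique, Finset.sum_singleton,
    Fin.default_eq_zero]
  ring

omit [DecidableEq ι] in
theorem fromCols_colV_mulVec (A : Matrix (Fin p) ι ℝ) (b : Fin p → ℝ) (y : ι → ℝ)
    (s : Fin 1 → ℝ) : fromCols A (colV b) *ᵥ (y ⊕ᵥ s) = A *ᵥ y + s 0 • b := by
  rw [fromCols_mulVec_sumElim]
  ext i
  simp [colV, mulVec, dotProduct, mul_comm]

theorem block3_posSemidef_iff_s6 (A : Matrix (Fin p) ι ℝ) (b : Fin p → ℝ) (τ : ℝ) :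
    (block3 (τ • (1 : Matrix ι ι ℝ)) 0 Aᵀ 0 (sc (1 - τ)) (rowV b) A (colV b) 1).PosSemidef ↔
      ∀ (y : ι → ℝ) (t : ℝ),
        (A *ᵥ y + t • b) ⬝ᵥ (A *ᵥ y + t • b) ≤ τ * (y ⬝ᵥ y) + (1 - τ) * t ^ 2 := by
  have hC : fromRows Aᵀ (rowV b) = (fromCols A (colV b))ᴴ := by
    rw [conjTranspose_eq_transpose_of_trivial, transpose_fromCols]
    rfl
  have hD : (fromBlocks (τ • (1 : Matrix ι ι ℝ)) 0 0 (sc (1 - τ))).IsHermitian := by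
    rw [IsHermitian, conjTranspose_eq_transpose_of_trivial, fromBlocks_transpose]
    simp only [transpose_smul, transpose_one, transpose_zero]
    congr
  let _ : Invertible (1 : Matrix (Fin p) (Fin p) ℝ) := invertibleOne
  have hschur := PosDef.fromBlocks₂₂ (fromBlocks (τ • (1 : Matrix ι ι ℝ)) 0 0 (sc (1 - τ)))
    (fromCols A (colV b))ᴴ (PosDef.one (n := Fin p))
  rw [conjTranspose_conjTranspose, inv_one, Matrix.mul_one] at hschur
  rw [block3, hC, hschur, posSemidef_iff_dotProduct_mulVec,
    and_iff_right (hD.sub (isHermitian_conjTranspose_mul_self _))]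
  have hquad (y : ι → ℝ) (s : Fin 1 → ℝ) :
      (y ⊕ᵥ s) ⬝ᵥ ((fromBlocks (τ • (1 : Matrix ι ι ℝ)) 0 0 (sc (1 - τ)) -
        (fromCols A (colV b))ᴴ * fromCols A (colV b)) *ᵥ (y ⊕ᵥ s)) =
        τ * (y ⬝ᵥ y) + (1 - τ) * s 0 ^ 2 - (A *ᵥ y + s 0 • b) ⬝ᵥ (A *ᵥ y + s 0 • b) := by
    rw [sub_mulVec, dotProduct_sub, dotProduct_fromBlocks_smul_one_sc_mulVec, ← mulVec_mulVec,
      dotProduct_mulVec, vecMul_conjTranspose, star_trivial, star_trivial, fromCols_colV_mulVec]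
  refine ⟨fun h y t => ?_, fun h x => ?_⟩
  · have := h (y ⊕ᵥ fun _ => t)
    rw [star_trivial, hquad] at this
    linarith
  · rw [star_trivial, ← Sum.elim_comp_inl_inr x, hquad]
    linarith [h (x ∘ Sum.inl) ((x ∘ Sum.inr) 0)]

end Block

theorem eunorm_le_one_iff {k : ℕ} (v : Fin k → ℝ) : eunorm v ≤ 1 ↔ v ⬝ᵥ v ≤ 1 := by
  rw [eunorm, Real.sqrt_le_one]
  simp only [dotProduct, sq]

section Ellipsoid

variable {n : ℕ} {L : Matrix (Fin n) (Fin n) ℝ}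

theorem mulVec_add_mem_ellip_sq_inv_iff (hL : L.IsSymm) (hdet : IsUnit L.det)
    (c y : Fin n → ℝ) : L *ᵥ y + c ∈ Ellip c (L ^ 2)⁻¹ ↔ y ⬝ᵥ y ≤ 1 := by
  have hquad : (L *ᵥ y) ⬝ᵥ ((L ^ 2)⁻¹ *ᵥ (L *ᵥ y)) = y ⬝ᵥ y := by
    rw [mulVec_mulVec, sq, Matrix.mul_inv_rev, Matrix.mul_assoc, nonsing_inv_mul _ hdet,
      Matrix.mul_one, ← vecMul_transpose, hL.eq, ← dotProduct_mulVec, mulVec_mulVec,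
      mul_nonsing_inv _ hdet, one_mulVec]
  rw [Ellip, Set.mem_ofPred_eq, add_sub_cancel_right, hquad]

theorem forall_mem_ellip_sq_inv_iff (hL : L.IsSymm) (hdet : IsUnit L.det) (c : Fin n → ℝ)
    (P : (Fin n → ℝ) → Prop) :
    (∀ x ∈ Ellip c (L ^ 2)⁻¹, P x) ↔ ∀ y : Fin n → ℝ, y ⬝ᵥ y ≤ 1 → P (L *ᵥ y + c) := by
  have hsurj : Function.Surjective fun y => L *ᵥ y + c := fun x =>
    ⟨L⁻¹ *ᵥ (x - c), by
      simp only [mulVec_mulVec, mul_nonsing_inv _ hdet, one_mulVec, sub_add_cancel]⟩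
  rw [hsurj.forall]
  simp only [mulVec_add_mem_ellip_sq_inv_iff hL hdet]

end Ellipsoid

/-- The affine controller `κ(x) = F L⁻¹ (x − c) + l` maps `E(c, L⁻²)` into
`{u : ‖U u‖ ≤ 1}` iff there exists `τ ≥ 0` with
`[[τI, 0, Fᵀ Uᵀ],[0, 1 − τ, lᵀ Uᵀ],[U F, U l, I]] ⪰ 0`. -/
theorem controller_input_constraint_iff {n m p : ℕ}
    (L : Matrix (Fin n) (Fin n) ℝ) (hL : L.PosDef)
    (c : Fin n → ℝ) (F : Matrix (Fin m) (Fin n) ℝ) (l : Fin m → ℝ)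
    (U : Matrix (Fin p) (Fin m) ℝ)
    (κ : (Fin n → ℝ) → (Fin m → ℝ))
    (hκ : ∀ x, κ x = (F * L⁻¹).mulVec (x - c) + l) :
    (∀ x ∈ Ellip c (L ^ 2)⁻¹, eunorm (U.mulVec (κ x)) ≤ 1) ↔
      ∃ τ : ℝ, 0 ≤ τ ∧
        (block3 (τ • (1 : Matrix (Fin n) (Fin n) ℝ)) 0 (U * F)ᵀ
                0 (sc (1 - τ)) (rowV (U.mulVec l))
                (U * F) (colV (U.mulVec l)) (1 : Matrix (Fin p) (Fin p) ℝ)).PosSemidef := by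
  have hdet : IsUnit L.det := isUnit_iff_ne_zero.mpr hL.det_pos.ne'
  have hκ' (y : Fin n → ℝ) : U *ᵥ κ (L *ᵥ y + c) = (U * F) *ᵥ y + U *ᵥ l := by
    rw [hκ, add_sub_cancel_right, mulVec_mulVec, Matrix.mul_assoc, nonsing_inv_mul _ hdet,
      Matrix.mul_one, mulVec_add, mulVec_mulVec]
  rw [forall_mem_ellip_sq_inv_iff (isHermitian_iff_isSymm.mp hL.isHermitian) hdet]
  simp only [hκ', eunorm_le_one_iff, block3_posSemidef_iff_s6]
  exact forall_dotProduct_mulVec_add_le_one_iff (U * F) (U *ᵥ l)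
end
end
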